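/- Let C and D be additive categories with shift by ℤ that are pretriangulated and have all small coproducts, and let adj : F ⊣ G be an adjunction with F : C ⥤ D and G : D ⥤ C both triangulated functors compatible with the shifts (the adjunction commuting with the shift data), and with G preserving all small coproducts. Suppose S is a set of objects of C such that every localizing class of objects of C (closed under isomorphisms, shifts, extensions along distinguished triangles, and small coproducts) containing S contains all objects of C, and T is a set of objects of D with the analogous property in D. If the unit map X → G(F(X)) is an isomorphism for every X ∈ S and the counit map F(G(Y)) → Y is an isomorphism for every Y ∈ T, then F is an equivalence of categories with quasi-inverse G. -/

import Mathlib

open CategoryTheory Limits Pretriangulated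

universe w v u

/-- A class of objects of a pretriangulated category with all small coproducts is
*localizing* if it is closed under isomorphisms, under the shifts, under extensions
along distinguished triangles, and under small coproducts. -/
def IsLocalizingClass {C : Type u} [Category.{v} C]
    [HasZeroObject C] [Preadditive C] [HasShift C ℤ]
    [∀ n : ℤ, (shiftFunctor C n).Additive] [Pretriangulated C]
    [HasCoproducts.{w} C] (P : Set C) : Prop :=
  (∀ X Y : C, (X ≅ Y) → X ∈ P → Y ∈ P) ∧
  (∀ (X : C) (n : ℤ), X ∈ P → (X⟦n⟧) ∈ P) ∧
  (∀ T : Triangle C, (T ∈ distTriang C) → T.obj₁ ∈ P → T.obj₂ ∈ P → T.obj₃ ∈ P) ∧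
  (∀ (J : Type w) (X : J → C), (∀ j : J, X j ∈ P) → (∐ X) ∈ P)

universe w' v₁ v₂ u₁ u₂

/-!
The objects on which a shift-compatible natural transformation between triangulated,
coproduct-preserving functors is invertible form a localizing class: closure under
extensions is the five lemma for triangles, closure under coproducts holds because a
coproduct of isomorphisms is an isomorphism. The unit and the counit are such
transformations (`F ⋙ G` and `G ⋙ F` preserve coproducts since `F` is a left adjoint),
so being invertible on the generators, they are invertible everywhere.
-/

namespace CategoryTheory

namespace NatTrans

variable {C : Type u₁} {D : Type u₂} [Category.{v₁} C] [Category.{v₂} D]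
  {F₁ F₂ : C ⥤ D} (τ : F₁ ⟶ F₂)

lemma isIso_app_sigma {J : Type*} (X : J → C) [HasCoproduct X] [HasCoproductsOfShape J D]
    [PreservesColimit (Discrete.functor X) F₁] [PreservesColimit (Discrete.functor X) F₂]
    [∀ j, IsIso (τ.app (X j))] : IsIso (τ.app (∐ X)) := by
  have hcomm : sigmaComparison F₁ X ≫ τ.app (∐ X) =
      Limits.Sigma.map (fun j => τ.app (X j)) ≫ sigmaComparison F₂ X := by
    ext j
    simp
  have : IsIso (sigmaComparison F₁ X ≫ τ.app (∐ X)) := by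
    rw [hcomm]
    infer_instance
  exact IsIso.of_isIso_comp_left (sigmaComparison F₁ X) _

variable [HasShift C ℤ] [HasShift D ℤ] [F₁.CommShift ℤ] [F₂.CommShift ℤ]
  [NatTrans.CommShift τ ℤ]

lemma isIso_app_shift (X : C) (n : ℤ) [IsIso (τ.app X)] : IsIso (τ.app (X⟦n⟧)) := by
  rw [NatTrans.app_shift τ n X]
  infer_instance

def mapTriangle : F₁.mapTriangle ⟶ F₂.mapTriangle where
  app T :=
    { hom₁ := τ.app T.obj₁
      hom₂ := τ.app T.obj₂
      hom₃ := τ.app T.obj₃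
      comm₁ := τ.naturality T.mor₁
      comm₂ := τ.naturality T.mor₂
      comm₃ := by
        have h : (F₁.map T.mor₃ ≫ (F₁.commShiftIso (1 : ℤ)).hom.app T.obj₁) ≫
            (τ.app T.obj₁)⟦(1 : ℤ)⟧' =
            τ.app T.obj₃ ≫ F₂.map T.mor₃ ≫ (F₂.commShiftIso (1 : ℤ)).hom.app T.obj₁ := by
          rw [Category.assoc, NatTrans.shift_app_comm, τ.naturality_assoc]
        exact h }
  naturality _ _ f := by
    ext <;> exact τ.naturality _

variable [HasZeroObject C] [HasZeroObject D] [Preadditive C] [Preadditive D]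
  [∀ n : ℤ, (shiftFunctor C n).Additive] [∀ n : ℤ, (shiftFunctor D n).Additive]
  [Pretriangulated C] [Pretriangulated D] [F₁.IsTriangulated] [F₂.IsTriangulated]

lemma isIso_app_obj₃ (T : Triangle C) (hT : T ∈ distTriang C)
    [IsIso (τ.app T.obj₁)] [IsIso (τ.app T.obj₂)] : IsIso (τ.app T.obj₃) :=
  isIso₃_of_isIso₁₂ ((mapTriangle τ).app T) (F₁.map_distinguished T hT)
    (F₂.map_distinguished T hT) ‹_› ‹_›

lemma isLocalizingClass_setOf_isIso_app [HasCoproducts.{w} C] [HasCoproducts.{w} D]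
    [∀ J : Type w, PreservesColimitsOfShape (Discrete J) F₁]
    [∀ J : Type w, PreservesColimitsOfShape (Discrete J) F₂] :
    IsLocalizingClass.{w} {X : C | IsIso (τ.app X)} := by
  refine ⟨fun X Y e hX => (isIso_app_iff_of_iso τ e).1 hX, fun X n hX => ?_,
    fun T hT h₁ h₂ => ?_, fun J X hX => ?_⟩
  · have : IsIso (τ.app X) := hX
    exact isIso_app_shift τ X n
  · have : IsIso (τ.app T.obj₁) := h₁
    have : IsIso (τ.app T.obj₂) := h₂
    exact isIso_app_obj₃ τ T hT
  · have : ∀ j, IsIso (τ.app (X j)) := hX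
    exact isIso_app_sigma τ X

end NatTrans

end CategoryTheory

/-- Let `adj : F ⊣ G` be an adjunction of triangulated functors, compatible with the
shifts, between pretriangulated categories with all small coproducts, such that `G`
preserves small coproducts. If `C` is generated by a set `S` of objects (the only
localizing class containing `S` is the class of all objects), `D` is generated by a
set `T`, the unit of the adjunction is an isomorphism on members of `S`, and the
counit is an isomorphism on members of `T`, then `F` is an equivalence of categories
with quasi-inverse `G`. -/
theorem isEquivalence_of_units_iso_on_generators
    {C : Type u₁} {D : Type u₂} [Category.{v₁} C] [Category.{v₂} D]
    [HasZeroObject C] [HasZeroObject D] [Preadditive C] [Preadditive D]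
    [HasShift C ℤ] [HasShift D ℤ]
    [∀ n : ℤ, (shiftFunctor C n).Additive] [∀ n : ℤ, (shiftFunctor D n).Additive]
    [Pretriangulated C] [Pretriangulated D]
    [HasCoproducts.{w'} C] [HasCoproducts.{w'} D]
    {F : C ⥤ D} {G : D ⥤ C} [F.Additive] [G.Additive] [F.CommShift ℤ] [G.CommShift ℤ]
    [F.IsTriangulated] [G.IsTriangulated]
    [∀ J : Type w', PreservesColimitsOfShape (Discrete J) G]
    (adj : F ⊣ G) [NatTrans.CommShift adj.unit ℤ] [NatTrans.CommShift adj.counit ℤ]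
    (S : Set C) (T : Set D)
    (hS : ∀ P : Set C, IsLocalizingClass.{w'} P → S ⊆ P → ∀ X : C, X ∈ P)
    (hT : ∀ P : Set D, IsLocalizingClass.{w'} P → T ⊆ P → ∀ Y : D, Y ∈ P)
    (hunit : ∀ X ∈ S, IsIso (adj.unit.app X))
    (hcounit : ∀ Y ∈ T, IsIso (adj.counit.app Y)) :
    ∃ e : C ≌ D, e.functor = F ∧ e.inverse = G := by
  have : PreservesColimitsOfSize.{w', w'} F := adj.leftAdjoint_preservesColimits
  have : ∀ X, IsIso (adj.unit.app X) :=
    hS _ (NatTrans.isLocalizingClass_setOf_isIso_app adj.unit) hunit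
  have : ∀ Y, IsIso (adj.counit.app Y) :=
    hT _ (NatTrans.isLocalizingClass_setOf_isIso_app adj.counit) hcounit
  exact ⟨adj.toEquivalence, rfl, rfl⟩
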